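/- arXiv:0801.4336 — 2 statements merged into one kernel-verified Lean document; each statement's English description precedes it below -/
import Mathlib

section
/- Let ω > 0 be a flatness constant for dimension n. Let P ⊆ ℝⁿ be a nonempty rational polyhedron of finite lattice width, let c ∈ ℤⁿ be a width direction of P (a nonzero integral vector with w_c(P) = w(P)), and let β := min{c·x : x ∈ P}. Then P contains a point of ℤⁿ if and only if the polyhedron P ∩ {x : β ≤ c·x ≤ β + ω} contains a point of ℤⁿ. -/
open Matrix Set MeasureTheory

noncomputable def widthAlong {n : ℕ} (K : Set (Fin n → ℝ)) (c : Fin n → ℝ) : EReal :=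
  sSup ((fun x => ((∑ i, c i * x i : ℝ) : EReal)) '' K) -
    sInf ((fun x => ((∑ i, c i * x i : ℝ) : EReal)) '' K)

noncomputable def latticeWidth {n : ℕ} (K : Set (Fin n → ℝ)) : EReal :=
  sInf {w : EReal | ∃ c : Fin n → ℤ, c ≠ 0 ∧ w = widthAlong K (fun i => (c i : ℝ))}

def IsFlatnessConstant (n : ℕ) (ω : ℝ) : Prop :=
  0 < ω ∧ ∀ K : Set (Fin n → ℝ),
    Bornology.IsBounded K → IsClosed K → Convex ℝ K → volume K ≠ 0 →
    (ω : EReal) ≤ latticeWidth K → ∃ z : Fin n → ℤ, (fun i => (z i : ℝ)) ∈ K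

def IsRatPolyhedron {n : ℕ} (P : Set (Fin n → ℝ)) : Prop :=
  ∃ (m : ℕ) (A : Matrix (Fin m) (Fin n) ℚ) (b : Fin m → ℚ),
    P = {x | ∀ i, (∑ j, (A i j : ℝ) * x j) ≤ (b i : ℝ)}

/-!
Suppose `P` has an integral point but none with `c·z ≤ β + ω`. Since `c` is integral, some
`T > β + ω` still leaves no integral point in `K = P ∩ {c·x ≤ T}`. The homothety of ratio
`(T - β) / w(P)` centred at a minimiser of `c` maps `P` into `K`, so `K` has width more than `ω`
along every integral direction. `K` is full-dimensional because a rational polyhedron with empty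
interior lies in a rational hyperplane and so has width `0` along its integral normal. Cutting `K`
down to a large ball keeps the width above `ω` in the finitely many directions along which a small
ball inside `K` is too thin, and the flatness theorem then yields an integral point of `K`.
-/

theorem sub_le_widthAlong {n : ℕ} {K : Set (Fin n → ℝ)} (c : Fin n → ℝ) {u v : Fin n → ℝ}
    (hu : u ∈ K) (hv : v ∈ K) : ((c ⬝ᵥ u - c ⬝ᵥ v : ℝ) : EReal) ≤ widthAlong K c := by
  rw [EReal.coe_sub]
  exact EReal.sub_le_sub (le_sSup ⟨u, hu, rfl⟩) (sInf_le ⟨v, hv, rfl⟩)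

theorem widthAlong_le {n : ℕ} {K : Set (Fin n → ℝ)} {c : Fin n → ℝ} {a b : ℝ}
    (h : ∀ x ∈ K, a ≤ c ⬝ᵥ x ∧ c ⬝ᵥ x ≤ b) : widthAlong K c ≤ ((b - a : ℝ) : EReal) := by
  rw [EReal.coe_sub]
  refine EReal.sub_le_sub (sSup_le ?_) (le_sInf ?_) <;> rintro _ ⟨x, hx, rfl⟩
  exacts [EReal.coe_le_coe_iff.2 (h x hx).2, EReal.coe_le_coe_iff.2 (h x hx).1]

theorem exists_lt_sub_of_lt_widthAlong {n : ℕ} {K : Set (Fin n → ℝ)} {c : Fin n → ℝ} {t : ℝ}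
    (hK : K.Nonempty) (h : (t : EReal) < widthAlong K c) :
    ∃ u ∈ K, ∃ v ∈ K, t < c ⬝ᵥ u - c ⬝ᵥ v := by
  by_contra! hle
  obtain ⟨x₀, hx₀⟩ := hK
  have hbdd : BddAbove ((c ⬝ᵥ ·) '' K) :=
    ⟨c ⬝ᵥ x₀ + t, by rintro _ ⟨u, hu, rfl⟩; linarith [hle u hu x₀ hx₀]⟩
  have hsup_le : ∀ x ∈ K, sSup ((c ⬝ᵥ ·) '' K) ≤ c ⬝ᵥ x + t := fun x hx =>
    csSup_le ⟨_, x₀, hx₀, rfl⟩ (by rintro _ ⟨u, hu, rfl⟩; linarith [hle u hu x hx])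
  have := widthAlong_le (a := sSup ((c ⬝ᵥ ·) '' K) - t) (b := sSup ((c ⬝ᵥ ·) '' K)) fun x hx =>
    ⟨by linarith [hsup_le x hx], le_csSup hbdd ⟨x, hx, rfl⟩⟩
  rw [sub_sub_cancel] at this
  exact h.not_ge this

theorem two_mul_sum_abs_le_widthAlong {n : ℕ} {K : Set (Fin n → ℝ)} {p : Fin n → ℝ} {ρ : ℝ}
    (hρ : 0 ≤ ρ) (hK : Metric.closedBall p ρ ⊆ K) (c : Fin n → ℝ) :
    ((2 * ρ * ∑ i, |c i| : ℝ) : EReal) ≤ widthAlong K c := by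
  set s : Fin n → ℝ := fun i => (SignType.sign (c i) : ℝ)
  have hs : ‖s‖ ≤ 1 := (pi_norm_le_iff_of_nonneg zero_le_one).2 fun i => by
    simp only [s, Real.norm_eq_abs]
    cases SignType.sign (c i) <;> simp
  have hmem : ∀ ε : ℝ, |ε| = 1 → p + (ε * ρ) • s ∈ K := fun ε hε => hK <| by
    rw [Metric.mem_closedBall, dist_self_add_left, norm_smul, Real.norm_eq_abs, abs_mul, hε,
      abs_of_nonneg hρ, one_mul]
    exact mul_le_of_le_one_right hρ hs
  have hcs : c ⬝ᵥ s = ∑ i, |c i| := Finset.sum_congr rfl fun i _ => self_mul_sign (c i)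
  have hwidth := sub_le_widthAlong c (hmem 1 (by simp)) (hmem (-1) (by simp))
  rw [dotProduct_add, dotProduct_add, dotProduct_smul, dotProduct_smul, smul_eq_mul,
    smul_eq_mul, hcs, add_sub_add_left_eq_sub, ← sub_mul] at hwidth
  convert hwidth using 3
  ring

theorem dotProduct_homothety {ι : Type*} [Fintype ι] (c x₀ x : ι → ℝ) (μ : ℝ) :
    c ⬝ᵥ AffineMap.homothety x₀ μ x = c ⬝ᵥ x₀ + μ * (c ⬝ᵥ x - c ⬝ᵥ x₀) := by
  rw [AffineMap.homothety_apply, vsub_eq_sub, vadd_eq_add, dotProduct_add, dotProduct_smul,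
    dotProduct_sub, smul_eq_mul, add_comm]

theorem lt_widthAlong_of_mapsTo_homothety {n : ℕ} {P K : Set (Fin n → ℝ)} {x₀ : Fin n → ℝ}
    {μ : ℝ} (hμ : 0 < μ) (hPK : MapsTo (AffineMap.homothety x₀ μ) P K) (hP : P.Nonempty)
    {c : Fin n → ℝ} {t : ℝ} (h : (t : EReal) < widthAlong P c) :
    ((μ * t : ℝ) : EReal) < widthAlong K c := by
  obtain ⟨u, hu, v, hv, huv⟩ := exists_lt_sub_of_lt_widthAlong hP h
  refine lt_of_lt_of_le (EReal.coe_lt_coe_iff.2 ?_) (sub_le_widthAlong c (hPK hu) (hPK hv))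
  rw [dotProduct_homothety, dotProduct_homothety]
  nlinarith

open Filter

theorem eventually_lt_widthAlong_inter_closedBall {n : ℕ} {K : Set (Fin n → ℝ)}
    {c : Fin n → ℝ} {t : ℝ} (hK : K.Nonempty) (h : (t : EReal) < widthAlong K c)
    (p : Fin n → ℝ) : ∀ᶠ R in atTop, (t : EReal) < widthAlong (K ∩ Metric.closedBall p R) c := by
  obtain ⟨u, hu, v, hv, huv⟩ := exists_lt_sub_of_lt_widthAlong hK h
  filter_upwards [eventually_ge_atTop (max (dist u p) (dist v p))] with R hR
  exact (EReal.coe_lt_coe_iff.2 huv).trans_le <| sub_le_widthAlong c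
    ⟨hu, Metric.mem_closedBall.2 (le_of_max_le_left hR)⟩
    ⟨hv, Metric.mem_closedBall.2 (le_of_max_le_right hR)⟩

theorem IsFlatnessConstant.exists_intCast_mem {n : ℕ} {ω : ℝ} (hω : IsFlatnessConstant n ω)
    {K : Set (Fin n → ℝ)} (hKc : IsClosed K) (hKv : Convex ℝ K) (hKi : (interior K).Nonempty)
    (hK : ∀ d : Fin n → ℤ, d ≠ 0 → (ω : EReal) < widthAlong K (fun i => (d i : ℝ))) :
    ∃ z : Fin n → ℤ, (fun i => (z i : ℝ)) ∈ K := by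
  obtain ⟨p, hp⟩ := hKi
  obtain ⟨ρ, hρ, hball⟩ :=
    Metric.nhds_basis_closedBall.mem_iff.1 (mem_interior_iff_mem_nhds.1 hp)
  -- outside `S`, the ball `closedBall p ρ` alone has width at least `ω`
  set M : ℤ := ⌈ω / (2 * ρ)⌉
  set S : Set (Fin n → ℤ) := Set.pi univ fun _ => Icc (-M) M
  have hS : S.Finite := Set.Finite.pi fun _ => Set.finite_Icc _ _
  obtain ⟨R, hρR, hR⟩ : ∃ R, ρ ≤ R ∧ ∀ d ∈ S, d ≠ 0 →
      (ω : EReal) < widthAlong (K ∩ Metric.closedBall p R) (fun i => (d i : ℝ)) :=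
    ((eventually_ge_atTop ρ).and (hS.eventually_all.2 fun d _ =>
      eventually_imp_distrib_left.2 fun hd =>
        eventually_lt_widthAlong_inter_closedBall ⟨p, interior_subset hp⟩ (hK d hd) p)).exists
  have hballR : Metric.closedBall p ρ ⊆ K ∩ Metric.closedBall p R :=
    subset_inter hball (Metric.closedBall_subset_closedBall hρR)
  have hlong : ∀ d ∉ S,
      (ω : EReal) ≤ widthAlong (K ∩ Metric.closedBall p R) (fun i => (d i : ℝ)) := by
    intro d hd
    simp only [S, Set.mem_pi, mem_univ, true_implies, mem_Icc, ← abs_le, not_forall,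
      not_le] at hd
    obtain ⟨j, hj⟩ := hd
    refine le_trans (EReal.coe_le_coe_iff.2 ?_) (two_mul_sum_abs_le_widthAlong hρ.le hballR _)
    calc ω ≤ 2 * ρ * M := by
          rw [← div_le_iff₀' (by positivity)]
          exact Int.le_ceil _
      _ ≤ 2 * ρ * |(d j : ℝ)| := by
          gcongr
          exact_mod_cast hj.le
      _ ≤ 2 * ρ * ∑ i, |(d i : ℝ)| := by
          gcongr
          exact Finset.single_le_sum (fun i _ => abs_nonneg (d i : ℝ)) (Finset.mem_univ j)
  obtain ⟨z, hz⟩ := hω.2 (K ∩ Metric.closedBall p R)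
    (Metric.isBounded_closedBall.subset inter_subset_right)
    (hKc.inter Metric.isClosed_closedBall) (hKv.inter (convex_closedBall p R))
    ((Metric.measure_closedBall_pos volume p hρ).trans_le (measure_mono hballR)).ne'
    (le_sInf <| by
      rintro _ ⟨d, hd, rfl⟩
      by_cases hdS : d ∈ S
      exacts [(hR d hdS hd).le, hlong d hdS])
  exact ⟨z, hz.1⟩

theorem Convex.exists_forall_mem_lt {E ι : Type*} [AddCommGroup E] [Module ℝ E] {s : Set E}
    (hs : Convex ℝ s) (hne : s.Nonempty) {F : E →ₗ[ℝ] ι → ℝ} {b : ι → ℝ}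
    (hle : ∀ x ∈ s, F x ≤ b) (I : Finset ι) (hlt : ∀ i ∈ I, ∃ x ∈ s, F x i < b i) :
    ∃ x ∈ s, ∀ i ∈ I, F x i < b i := by
  classical
  induction I using Finset.induction_on with
  | empty => exact hne.imp fun x hx => ⟨hx, by simp⟩
  | insert j I _ ih =>
    obtain ⟨x, hx, hxI⟩ := ih fun i hi => hlt i (Finset.mem_insert_of_mem hi)
    obtain ⟨y, hy, hyj⟩ := hlt j (Finset.mem_insert_self j I)
    refine ⟨(1 / 2 : ℝ) • x + (1 / 2 : ℝ) • y, hs hx hy (by norm_num) (by norm_num) (by norm_num),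
      Finset.forall_mem_insert .. |>.2 ?_⟩
    simp only [map_add, map_smul, Pi.add_apply, Pi.smul_apply, smul_eq_mul]
    exact ⟨by linarith [hle x hx j], fun i hi => by linarith [hxI i hi, hle y hy i]⟩

section Polyhedron

variable {ι κ : Type*} [Fintype κ] {A : Matrix ι κ ℝ} {b : ι → ℝ}

theorem convex_setOf_mulVec_le : Convex ℝ {x | A *ᵥ x ≤ b} :=
  (convex_Iic b).linear_preimage A.mulVecLin

theorem isClosed_setOf_mulVec_le : IsClosed {x | A *ᵥ x ≤ b} :=
  isClosed_Iic.preimage A.mulVecLin.continuous_of_finiteDimensional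

theorem interior_setOf_mulVec_le_nonempty [Fintype ι] (hne : {x | A *ᵥ x ≤ b}.Nonempty)
    (h : ∀ i, A i ≠ 0 → ∃ x, A *ᵥ x ≤ b ∧ (A *ᵥ x) i < b i) :
    (interior {x | A *ᵥ x ≤ b}).Nonempty := by
  classical
  set I := Finset.univ.filter fun i => A i ≠ 0
  obtain ⟨x, -, hxI⟩ := convex_setOf_mulVec_le.exists_forall_mem_lt hne (F := A.mulVecLin)
    (fun _ hx => hx) I fun i hi => h i (Finset.mem_filter.1 hi).2
  refine ⟨x, mem_interior.2 ⟨⋂ i ∈ I, {y | (A *ᵥ y) i < b i}, fun y hy i => ?_,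
    isOpen_biInter_finset fun i _ => isOpen_lt
      ((continuous_apply i).comp A.mulVecLin.continuous_of_finiteDimensional) continuous_const,
    mem_iInter₂.2 hxI⟩⟩
  by_cases hi : A i = 0
  · obtain ⟨x₀, hx₀⟩ := hne
    simpa [Matrix.mulVec, hi] using hx₀ i
  · exact (mem_iInter₂.1 hy i (Finset.mem_filter.2 ⟨Finset.mem_univ i, hi⟩)).le

end Polyhedron

theorem exists_intCast_eq_mul_ratCast {ι : Type*} [Finite ι] (v : ι → ℚ) :
    ∃ N : ℤ, N ≠ 0 ∧ ∃ d : ι → ℤ, ∀ j, (d j : ℚ) = N * v j := by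
  obtain ⟨N, hN⟩ := IsLocalization.exist_integer_multiples_of_finite (nonZeroDivisors ℤ) v
  choose d hd using hN
  exact ⟨N, nonZeroDivisors.coe_ne_zero N, d, fun j => by simpa using hd j⟩

section RatPolyhedron

variable {n : ℕ} {P : Set (Fin n → ℝ)}

theorem isRatPolyhedron_iff_mulVec : IsRatPolyhedron P ↔ ∃ (m : ℕ) (A : Matrix (Fin m) (Fin n) ℚ)
    (b : Fin m → ℚ), P = {x | A.map ((↑) : ℚ → ℝ) *ᵥ x ≤ fun i => (b i : ℝ)} :=
  Iff.rfl

theorem IsRatPolyhedron.convex (hP : IsRatPolyhedron P) : Convex ℝ P := by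
  obtain ⟨m, A, b, rfl⟩ := isRatPolyhedron_iff_mulVec.1 hP
  exact convex_setOf_mulVec_le

theorem IsRatPolyhedron.isClosed (hP : IsRatPolyhedron P) : IsClosed P := by
  obtain ⟨m, A, b, rfl⟩ := isRatPolyhedron_iff_mulVec.1 hP
  exact isClosed_setOf_mulVec_le

theorem IsRatPolyhedron.interior_nonempty (hP : IsRatPolyhedron P) (hne : P.Nonempty)
    (hwidth : ∀ d : Fin n → ℤ, d ≠ 0 → 0 < widthAlong P (fun i => (d i : ℝ))) :
    (interior P).Nonempty := by
  obtain ⟨m, A, b, rfl⟩ := isRatPolyhedron_iff_mulVec.1 hP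
  refine interior_setOf_mulVec_le_nonempty hne fun i hi => ?_
  by_contra! hflat
  obtain ⟨N, hN, d, hd⟩ := exists_intCast_eq_mul_ratCast (A i)
  have hd0 : d ≠ 0 := fun h0 => hi (funext fun j => by simpa [h0, hN] using hd j)
  have hdx : ∀ x, A.map ((↑) : ℚ → ℝ) *ᵥ x ≤ (fun i => (b i : ℝ)) →
      (fun j => (d j : ℝ)) ⬝ᵥ x = N * b i := by
    intro x hx
    have hdR : ∀ j, (d j : ℝ) = N * A i j := fun j => by exact_mod_cast hd j
    have hrow : (A.map ((↑) : ℚ → ℝ) *ᵥ x) i = b i := le_antisymm (hx i) (hflat x hx)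
    rw [← hrow]
    simp only [dotProduct, Matrix.mulVec, Matrix.map_apply, hdR, mul_assoc, Finset.mul_sum]
  refine (hwidth d hd0).not_ge ?_
  exact (widthAlong_le fun x hx => ⟨(hdx x hx).ge, (hdx x hx).le⟩).trans_eq (by simp)

end RatPolyhedron

theorem IsFlatnessConstant.exists_intCast_mem_dotProduct_le {n : ℕ} {ω : ℝ}
    (hω : IsFlatnessConstant n ω) {P : Set (Fin n → ℝ)} (hP : IsRatPolyhedron P)
    {x₀ : Fin n → ℝ} (hx₀ : x₀ ∈ P) {c : Fin n → ℝ} {W T : ℝ}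
    (hcP : ∀ x ∈ P, c ⬝ᵥ x ≤ c ⬝ᵥ x₀ + W)
    (hW : ∀ d : Fin n → ℤ, d ≠ 0 → (W : EReal) ≤ widthAlong P (fun i => (d i : ℝ)))
    (hωT : c ⬝ᵥ x₀ + ω < T) (hTW : T ≤ c ⬝ᵥ x₀ + W) :
    ∃ z : Fin n → ℤ, (fun i => (z i : ℝ)) ∈ P ∧ c ⬝ᵥ (fun i => (z i : ℝ)) ≤ T := by
  have hW₀ : 0 < W := by linarith [hω.1]
  set μ := (T - c ⬝ᵥ x₀) / W
  have hμ₀ : 0 < μ := div_pos (by linarith [hω.1]) hW₀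
  have hμW : μ * W = T - c ⬝ᵥ x₀ := div_mul_cancel₀ _ hW₀.ne'
  set K := P ∩ {x | c ⬝ᵥ x ≤ T}
  have hPK : MapsTo (AffineMap.homothety x₀ μ) P K := fun x hx => by
    refine ⟨?_, ?_⟩
    · rw [AffineMap.homothety_apply, vsub_eq_sub, vadd_eq_add, add_comm]
      exact hP.convex.add_smul_sub_mem hx₀ hx
        ⟨hμ₀.le, (div_le_one hW₀).2 (by linarith)⟩
    · show c ⬝ᵥ _ ≤ T
      rw [dotProduct_homothety]
      nlinarith [hcP x hx]
  have hK : ∀ d : Fin n → ℤ, d ≠ 0 → (ω : EReal) < widthAlong K (fun i => (d i : ℝ)) := by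
    intro d hd
    have hωμ : ω / μ < W := by rw [div_lt_iff₀ hμ₀]; linarith
    simpa [mul_div_cancel₀ ω hμ₀.ne'] using lt_widthAlong_of_mapsTo_homothety hμ₀ hPK ⟨x₀, hx₀⟩
      ((EReal.coe_lt_coe_iff.2 hωμ).trans_le (hW d hd))
  have hKi : (interior K).Nonempty := by
    have hPi := hP.interior_nonempty ⟨x₀, hx₀⟩ fun d hd =>
      (EReal.coe_pos.2 hW₀).trans_le (hW d hd)
    exact (hPi.image _).mono <| interior_maximal ((image_mono interior_subset).trans
      hPK.image_subset) ((AffineMap.homothety_isOpenMap x₀ μ hμ₀.ne') _ isOpen_interior)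
  obtain ⟨z, hzP, hzT⟩ := hω.exists_intCast_mem
    (hP.isClosed.inter (isClosed_le (continuous_const.dotProduct continuous_id) continuous_const))
    (hP.convex.inter (convex_halfSpace_le ⟨dotProduct_add c, fun r x => dotProduct_smul r c x⟩ T))
    hKi hK
  exact ⟨z, hzP, hzT⟩

theorem flatness_application_general {n : ℕ} (ω : ℝ) (hω : IsFlatnessConstant n ω)
    (P : Set (Fin n → ℝ)) (hP : IsRatPolyhedron P)
    (hfin : latticeWidth P ≠ ⊤)
    (c : Fin n → ℤ)
    (hdir : widthAlong P (fun i => (c i : ℝ)) = latticeWidth P)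
    (β : ℝ)
    (hβ : IsLeast {r : ℝ | ∃ x ∈ P, r = ∑ i, (c i : ℝ) * x i} β) :
    (∃ z : Fin n → ℤ, (fun i => (z i : ℝ)) ∈ P) ↔
      (∃ z : Fin n → ℤ, (fun i => (z i : ℝ)) ∈ P ∧
        β ≤ ∑ i, (c i : ℝ) * (z i : ℝ) ∧ ∑ i, (c i : ℝ) * (z i : ℝ) ≤ β + ω) := by
  refine ⟨fun ⟨z₀, hz₀⟩ => ?_, fun ⟨z, hz, _⟩ => ⟨z, hz⟩⟩
  obtain ⟨⟨x₀, hx₀, rfl⟩, hmin⟩ := hβ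
  set c' : Fin n → ℝ := fun i => (c i : ℝ)
  have hwidth : ∀ x ∈ P, ((c' ⬝ᵥ x - c' ⬝ᵥ x₀ : ℝ) : EReal) ≤ latticeWidth P :=
    fun x hx => hdir ▸ sub_le_widthAlong c' hx hx₀
  obtain ⟨W, hW⟩ : ∃ W : ℝ, latticeWidth P = W :=
    ⟨_, (EReal.coe_toReal hfin (ne_bot_of_le_ne_bot (EReal.coe_ne_bot _) (hwidth x₀ hx₀))).symm⟩
  have hcP : ∀ x ∈ P, c' ⬝ᵥ x ≤ c' ⬝ᵥ x₀ + W := fun x hx => by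
    have := hwidth x hx
    rw [hW, EReal.coe_le_coe_iff] at this
    linarith
  by_contra! hslab
  obtain ⟨k, hk, hgap⟩ : ∃ k : ℤ, c' ⬝ᵥ x₀ + ω < k ∧
      ∀ z : Fin n → ℤ, (fun i => (z i : ℝ)) ∈ P → k ≤ c' ⬝ᵥ (fun i => (z i : ℝ)) := by
    refine ⟨⌊c' ⬝ᵥ x₀ + ω⌋ + 1, by push_cast; exact Int.lt_floor_add_one _, fun z hz => ?_⟩
    have hlt : c' ⬝ᵥ x₀ + ω < c' ⬝ᵥ (fun i => (z i : ℝ)) := hslab z hz (hmin ⟨_, hz, rfl⟩)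
    have hcast : c' ⬝ᵥ (fun i => (z i : ℝ)) = ((c ⬝ᵥ z : ℤ) : ℝ) := by simp [c', dotProduct]
    rw [hcast] at hlt ⊢
    exact_mod_cast Int.add_one_le_iff.2 (Int.floor_lt.2 hlt)
  obtain ⟨z, hzP, hzT⟩ := hω.exists_intCast_mem_dotProduct_le hP hx₀ hcP
    (fun d hd => hW ▸ sInf_le ⟨d, hd, rfl⟩) (T := (c' ⬝ᵥ x₀ + ω + k) / 2) (by linarith)
    (by linarith [hgap z₀ hz₀, hcP _ hz₀])
  linarith [hgap z hzP]

/-- Lemma on the use of the flatness theorem.  Let `ω` be a flatness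
constant for dimension `n`, let `P` be a nonempty rational polyhedron of finite lattice
width, let `c` be a width direction of `P`, and `β = min {c·x : x ∈ P}`.  Then `P`
contains an integral point iff `P ∩ {x : β ≤ c·x ≤ β + ω}` contains an integral point. -/
theorem flatness_application {n : ℕ} (ω : ℝ) (hω : IsFlatnessConstant n ω)
    (P : Set (Fin n → ℝ)) (hP : IsRatPolyhedron P) (hne : P.Nonempty)
    (hfin : latticeWidth P ≠ ⊤)
    (c : Fin n → ℤ) (hc : c ≠ 0)
    (hdir : widthAlong P (fun i => (c i : ℝ)) = latticeWidth P)
    (β : ℝ)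
    (hβ : IsLeast {r : ℝ | ∃ x ∈ P, r = ∑ i, (c i : ℝ) * x i} β) :
    (∃ z : Fin n → ℤ, (fun i => (z i : ℝ)) ∈ P) ↔
      (∃ z : Fin n → ℤ, (fun i => (z i : ℝ)) ∈ P ∧
        β ≤ ∑ i, (c i : ℝ) * (z i : ℝ) ∧ ∑ i, (c i : ℝ) * (z i : ℝ) ≤ β + ω) :=
  flatness_application_general ω hω P hP hfin c hdir β hβ
end

section
/- Let A ∈ ℚ^{m×n} have full column rank and let b ∈ ℝ^m be such that P_b := {x : A x ≤ b} is nonempty and has finite lattice width. Then there exist bases N₁ and N₂ of A such that, with C₁ := {y A_{N₁} : y ≥ 0} and C₂ := {−y A_{N₂} : y ≥ 0}, the lattice width of P_b equals w(P_b) = min{ c (F_{N₁} − F_{N₂}) b : c ∈ C₁ ∩ C₂ ∩ ℤⁿ, c ≠ 0 }, and for every c ∈ C₁ ∩ C₂ one has max{c·x : x ∈ P_b} = c F_{N₁} b and min{c·x : x ∈ P_b} = c F_{N₂} b. -/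
open Matrix Set

def Pb {m n : ℕ} (A : Matrix (Fin m) (Fin n) ℚ) (b : Fin m → ℝ) : Set (Fin n → ℝ) :=
  {x | ∀ i, (∑ j, (A i j : ℝ) * x j) ≤ b i}

def IsBasisOf {m n : ℕ} (A : Matrix (Fin m) (Fin n) ℚ) (N : Fin n → Fin m) : Prop :=
  Function.Injective N ∧ IsUnit (A.submatrix N id).det

noncomputable def FN {m n : ℕ} (A : Matrix (Fin m) (Fin n) ℚ) (N : Fin n → Fin m)
    (b : Fin m → ℝ) : Fin n → ℝ :=
  (((A.submatrix N id).map ((↑) : ℚ → ℝ))⁻¹).mulVec (fun i => b (N i))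

def posCone {m n : ℕ} (A : Matrix (Fin m) (Fin n) ℚ) (N : Fin n → Fin m) :
    Set (Fin n → ℝ) :=
  {c | ∃ y : Fin n → ℝ, (∀ i, 0 ≤ y i) ∧ ∀ j, c j = ∑ i, y i * (A (N i) j : ℝ)}

def negCone {m n : ℕ} (A : Matrix (Fin m) (Fin n) ℚ) (N : Fin n → Fin m) :
    Set (Fin n → ℝ) :=
  {c | ∃ y : Fin n → ℝ, (∀ i, 0 ≤ y i) ∧ ∀ j, c j = -∑ i, y i * (A (N i) j : ℝ)}

/-!
For an integral direction `c` of finite width, `c ⬝ᵥ x` is bounded on both sides on `P_b`. By the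
fundamental theorem of linear programming its maximum is then attained at a feasible basis `N₁`
with `c ∈ C₁`, and its minimum at a feasible basis `N₂` with `c ∈ C₂`: descend to a vertex, apply
Farkas' lemma to the tight rows at an optimal vertex, and make the resulting cone basic by
Carathéodory. Conversely, for any pair of feasible bases, weak duality shows that every
`c ∈ C₁ ∩ C₂` attains its maximum and minimum at `F_{N₁} b` and `F_{N₂} b`, so that
`w_c(P_b) = c (F_{N₁} - F_{N₂}) b`. There are finitely many pairs of bases, and one minimising the
infimum of these values realises the lattice width.
-/

theorem LinearIndepOn.insert_of_comp {ι K M M' : Type*} [DivisionRing K] [AddCommGroup M]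
    [Module K M] [AddCommGroup M'] [Module K M'] {v : ι → M} {f : M →ₗ[K] M'} {s : Set ι}
    {a : ι} (hs : LinearIndepOn K (f ∘ v) s) (hfa : f (v a) = 0) (ha : v a ≠ 0) :
    LinearIndepOn K v (insert a s) := by
  refine linearIndepOn_insert_iff.2 ⟨hs.of_comp f, fun hmem => (ha ?_).elim⟩
  have hdisj := Submodule.range_ker_disjoint (v := fun i : s => v i) hs
  rw [← Set.image_eq_range] at hdisj
  exact Submodule.disjoint_def.1 hdisj _ hmem hfa

theorem span_eq_top_of_forall_dotProduct_eq_zero {K : Type*} [Field K] {n : ℕ}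
    {S : Set (Fin n → K)} (hS : ∀ d, (∀ s ∈ S, s ⬝ᵥ d = 0) → d = 0) :
    Submodule.span K S = ⊤ := by
  by_contra hne
  obtain ⟨f, hf, hfS⟩ := Submodule.exists_dual_map_eq_bot_of_lt_top (lt_top_iff_ne_top.2 hne)
    inferInstance
  obtain ⟨d, rfl⟩ := (dotProductEquiv K (Fin n)).surjective f
  refine hf ?_
  suffices d = 0 by rw [this, map_zero]
  refine hS d fun s hs => ?_
  rw [dotProduct_comm]
  exact LinearMap.le_ker_iff_map.2 hfS (Submodule.subset_span hs)

theorem exists_linearIndependent_comp_of_linearIndepOn {ι K : Type*} [Field K] {n : ℕ}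
    {v : ι → Fin n → K} {s T : Set ι} (hs : LinearIndepOn K v s) (hsT : s ⊆ T)
    (hT : Submodule.span K (v '' T) = ⊤) :
    ∃ N : Fin n → ι, LinearIndependent K (v ∘ N) ∧ (∀ k, N k ∈ T) ∧ s ⊆ Set.range N := by
  obtain ⟨u, huT, hsu, hTu, hu⟩ := exists_linearIndepOn_extension hs hsT
  have hspan : ⊤ ≤ Submodule.span K (Set.range fun i : u => v i) := by
    rw [← hT, ← Set.image_eq_range]
    exact Submodule.span_le.2 hTu
  let e : Fin n ≃ u := (Pi.basisFun K (Fin n)).indexEquiv (Module.Basis.mk hu hspan)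
  refine ⟨fun k => e k, hu.comp e e.injective, fun k => huT (e k).2, fun i hi => ?_⟩
  exact ⟨e.symm ⟨i, hsu hi⟩, by simp⟩

theorem exists_sInf_eq_sInf_of_finite {β γ : Type*} [CompleteLinearOrder γ] {P : Set β}
    (hP : P.Finite) {S : β → Set γ} {T : Set γ} (hT : sInf T ≠ ⊤) (hsub : ∀ p ∈ P, S p ⊆ T)
    (hcover : ∀ t ∈ T, t ≠ ⊤ → ∃ p ∈ P, t ∈ S p) : ∃ p ∈ P, sInf T = sInf (S p) := by
  obtain ⟨t, htT, ht⟩ : ∃ t ∈ T, t ≠ ⊤ := by simpa [sInf_eq_top] using hT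
  obtain ⟨p₀, hp₀, -⟩ := hcover t htT ht
  obtain ⟨p, hp, hmin⟩ :=
    Set.exists_min_image P (fun p => sInf (S p)) hP (⟨p₀, hp₀⟩ : P.Nonempty)
  refine ⟨p, hp, le_antisymm (sInf_le_sInf (hsub p hp)) (le_sInf fun t ht => ?_)⟩
  by_cases htop : t = ⊤
  · exact htop ▸ le_top
  obtain ⟨q, hq, htq⟩ := hcover t ht htop
  exact (hmin q hq).trans (sInf_le htq)

theorem Matrix.eq_zero_of_map_mulVec_eq_zero {m n K L : Type*} [Fintype m] [Fintype n]
    [DecidableEq n] [Field K] [LinearOrder K] [IsStrictOrderedRing K] [Field L]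
    {A : Matrix m n K} (hA : A.rank = Fintype.card n) (f : K →+* L) {d : n → L}
    (hd : A.map f *ᵥ d = 0) : d = 0 := by
  have hker : LinearMap.ker A.mulVecLin = ⊥ := by
    have := LinearMap.finrank_range_add_finrank_ker A.mulVecLin
    rw [← Matrix.rank, hA, Module.finrank_fintype_fun_eq_card, add_eq_left] at this
    exact Submodule.finrank_eq_zero.1 this
  have hdet : (Aᵀ * A).det ≠ 0 := fun h => by
    obtain ⟨v, hv, hAv⟩ := exists_mulVec_eq_zero_iff.2 h
    have : v ∈ LinearMap.ker (Aᵀ * A).mulVecLin := hAv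
    rw [ker_mulVecLin_transpose_mul_self, hker] at this
    exact hv this
  have hdet' : ((A.map f)ᵀ * A.map f).det ≠ 0 := by
    rwa [← transpose_map, ← Matrix.map_mul, ← RingHom.mapMatrix_apply, ← RingHom.map_det,
      map_ne_zero]
  exact eq_zero_of_mulVec_eq_zero hdet' (by rw [← mulVec_mulVec, hd, mulVec_zero])

/-- A multiple of the projection along `w` onto the hyperplane `d⊥`. -/
def projAlong {n : ℕ} (w d : Fin n → ℝ) : (Fin n → ℝ) →ₗ[ℝ] Fin n → ℝ :=
  (w ⬝ᵥ d) • LinearMap.id - (dotProductEquiv ℝ (Fin n) d).smulRight w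

section projAlong

variable {n : ℕ} {w d : Fin n → ℝ}

@[simp]
lemma projAlong_apply (u : Fin n → ℝ) : projAlong w d u = (w ⬝ᵥ d) • u - (u ⬝ᵥ d) • w := by
  simp [projAlong, dotProduct_comm d]

lemma projAlong_self : projAlong w d w = 0 := by
  simp

lemma dotProduct_sub_smul_eq_projAlong_dotProduct (u e : Fin n → ℝ) :
    u ⬝ᵥ ((w ⬝ᵥ d) • e - (w ⬝ᵥ e) • d) = projAlong w d u ⬝ᵥ e := by
  simp only [projAlong_apply, dotProduct_sub, sub_dotProduct, dotProduct_smul, smul_dotProduct,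
    smul_eq_mul]
  ring

lemma eq_smul_of_projAlong_eq_zero (hwd : w ⬝ᵥ d ≠ 0) {x : Fin n → ℝ}
    (hx : projAlong w d x = 0) : x = ((x ⬝ᵥ d) / (w ⬝ᵥ d)) • w := by
  rw [projAlong_apply, sub_eq_zero] at hx
  rw [div_eq_inv_mul, mul_smul, ← hx, smul_smul, inv_mul_cancel₀ hwd, one_smul]

end projAlong

/-- Farkas' lemma, refined by Carathéodory's theorem for cones: the generators used can be
taken linearly independent. -/
theorem exists_linearIndepOn_nonneg_sum_or_separating {ι : Type*} [DecidableEq ι] {n : ℕ}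
    (s : Finset ι) (v : ι → Fin n → ℝ) (c : Fin n → ℝ) :
    (∃ t ⊆ s, LinearIndepOn ℝ v (t : Set ι) ∧ ∃ y : ι → ℝ, 0 ≤ y ∧ c = ∑ i ∈ t, y i • v i) ∨
      ∃ d, (∀ i ∈ s, v i ⬝ᵥ d ≤ 0) ∧ 0 < c ⬝ᵥ d := by
  induction s using Finset.induction_on generalizing v c with
  | empty =>
    by_cases hc : c = 0
    · exact .inl ⟨∅, subset_rfl, by simp, 0, le_rfl, by simp [hc]⟩
    · exact .inr ⟨c, by simp, by simpa using dotProduct_self_star_pos_iff.2 hc⟩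
  | @insert a s ha ih =>
    obtain ⟨t, hts, ht, y, hy, hc⟩ | ⟨d, hd, hcd⟩ := ih v c
    · exact .inl ⟨t, hts.trans (Finset.subset_insert a s), ht, y, hy, hc⟩
    rcases le_or_gt (v a ⬝ᵥ d) 0 with had | had
    · exact .inr ⟨d, Finset.forall_mem_insert _ _ _ |>.2 ⟨had, hd⟩, hcd⟩
    obtain ⟨t, hts, ht, z, hz, hc'⟩ | ⟨e, he, hce⟩ :=
      ih (projAlong (v a) d ∘ v) (projAlong (v a) d c)
    · have hat : a ∉ t := fun h => ha (hts h)
      set x := c - ∑ i ∈ t, z i • v i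
      have hx : x = ((x ⬝ᵥ d) / (v a ⬝ᵥ d)) • v a :=
        eq_smul_of_projAlong_eq_zero had.ne' (by simp only [x, map_sub, map_sum, map_smul, hc',
          Function.comp_apply, sub_self])
      have hxd : 0 ≤ x ⬝ᵥ d := by
        have : ∑ i ∈ t, z i * (v i ⬝ᵥ d) ≤ 0 :=
          Finset.sum_nonpos fun i hi => mul_nonpos_of_nonneg_of_nonpos (hz i) (hd i (hts hi))
        simp only [x, sub_dotProduct, sum_dotProduct, smul_dotProduct, smul_eq_mul]
        linarith
      refine .inl ⟨insert a t, Finset.insert_subset_insert a hts, ?_,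
        Function.update z a ((x ⬝ᵥ d) / (v a ⬝ᵥ d)),
        le_update_iff.2 ⟨div_nonneg hxd had.le, fun j _ => hz j⟩, ?_⟩
      · rw [Finset.coe_insert]
        exact ht.insert_of_comp projAlong_self fun h => by simp [h] at had
      · rw [Finset.sum_insert hat, Function.update_self, ← hx, Finset.sum_congr rfl fun i hi => by
          rw [Function.update_of_ne (ne_of_mem_of_not_mem hi hat)]]
        simp [x]
    · refine .inr ⟨(v a ⬝ᵥ d) • e - (v a ⬝ᵥ e) • d, Finset.forall_mem_insert _ _ _ |>.2 ⟨?_,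
        fun i hi => ?_⟩, ?_⟩ <;> rw [dotProduct_sub_smul_eq_projAlong_dotProduct]
      exacts [by simp, he i hi, hce]

def polyhedron {ι : Type*} {n : ℕ} (a : ι → Fin n → ℝ) (b : ι → ℝ) : Set (Fin n → ℝ) :=
  {x | ∀ i, a i ⬝ᵥ x ≤ b i}

def IsVertex {ι : Type*} {n : ℕ} (a : ι → Fin n → ℝ) (b : ι → ℝ) (x : Fin n → ℝ) : Prop :=
  x ∈ polyhedron a b ∧ ∀ d, (∀ i, a i ⬝ᵥ x = b i → a i ⬝ᵥ d = 0) → d = 0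

section Polyhedron

variable {ι : Type*} {n : ℕ} {a : ι → Fin n → ℝ} {b : ι → ℝ} {c x d : Fin n → ℝ}

lemma dotProduct_add_smul (u x d : Fin n → ℝ) (t : ℝ) :
    u ⬝ᵥ (x + t • d) = u ⬝ᵥ x + t * (u ⬝ᵥ d) := by
  rw [dotProduct_add, dotProduct_smul, smul_eq_mul]

/-- The ratio test of the simplex method. -/
theorem exists_nonneg_add_smul_mem_polyhedron_tight [Fintype ι] (hx : x ∈ polyhedron a b)
    (hd : ∃ j, 0 < a j ⬝ᵥ d) :
    ∃ t : ℝ, 0 ≤ t ∧ x + t • d ∈ polyhedron a b ∧ ∃ j, 0 < a j ⬝ᵥ d ∧ a j ⬝ᵥ (x + t • d) = b j := by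
  classical
  obtain ⟨j, hj, hmin⟩ := Finset.exists_min_image {j | 0 < a j ⬝ᵥ d}
    (fun j => (b j - a j ⬝ᵥ x) / (a j ⬝ᵥ d))
    (by obtain ⟨j, hj⟩ := hd; exact ⟨j, (Finset.mem_filter_univ j).2 hj⟩)
  rw [Finset.mem_filter_univ] at hj
  have ht : 0 ≤ (b j - a j ⬝ᵥ x) / (a j ⬝ᵥ d) := div_nonneg (sub_nonneg.2 (hx j)) hj.le
  refine ⟨_, ht, fun i => ?_, j, hj, ?_⟩
  · rw [dotProduct_add_smul]
    rcases le_or_gt (a i ⬝ᵥ d) 0 with hi | hi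
    · linarith [hx i, mul_nonpos_of_nonneg_of_nonpos ht hi]
    · linarith [(le_div_iff₀ hi).1 (hmin i ((Finset.mem_filter_univ i).2 hi))]
  · rw [dotProduct_add_smul, div_mul_cancel₀ _ hj.ne']
    ring

theorem exists_pos_add_smul_mem_polyhedron [Fintype ι] (hx : x ∈ polyhedron a b)
    (hd : ∀ i, a i ⬝ᵥ x = b i → a i ⬝ᵥ d ≤ 0) : ∃ t : ℝ, 0 < t ∧ x + t • d ∈ polyhedron a b := by
  by_cases hj : ∃ j, 0 < a j ⬝ᵥ d
  · obtain ⟨t, ht, hmem, j, hj, htight⟩ := exists_nonneg_add_smul_mem_polyhedron_tight hx hj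
    refine ⟨t, ht.lt_of_ne ?_, hmem⟩
    rintro rfl
    exact (hd j (by simpa using htight)).not_gt hj
  · push Not at hj
    refine ⟨1, one_pos, fun i => ?_⟩
    rw [dotProduct_add_smul]
    linarith [hx i, hj i]

theorem dotProduct_nonpos_of_forall_dotProduct_nonpos
    (hbdd : BddAbove ((c ⬝ᵥ ·) '' polyhedron a b)) (hx : x ∈ polyhedron a b)
    (hd : ∀ i, a i ⬝ᵥ d ≤ 0) : c ⬝ᵥ d ≤ 0 := by
  obtain ⟨B, hB⟩ := hbdd
  by_contra! hcd
  have hxB : c ⬝ᵥ x ≤ B := hB ⟨x, hx, rfl⟩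
  have ht : 0 ≤ (B - c ⬝ᵥ x + 1) / (c ⬝ᵥ d) := div_nonneg (by linarith) hcd.le
  have hmem : x + ((B - c ⬝ᵥ x + 1) / (c ⬝ᵥ d)) • d ∈ polyhedron a b := fun i => by
    rw [dotProduct_add_smul]
    linarith [hx i, mul_nonpos_of_nonneg_of_nonpos ht (hd i)]
  have : c ⬝ᵥ (x + ((B - c ⬝ᵥ x + 1) / (c ⬝ᵥ d)) • d) ≤ B := hB ⟨_, hmem, rfl⟩
  rw [dotProduct_add_smul, div_mul_cancel₀ _ hcd.ne'] at this
  linarith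

theorem exists_improving_direction (ha : ∀ d, (∀ i, a i ⬝ᵥ d = 0) → d = 0)
    (hbdd : BddAbove ((c ⬝ᵥ ·) '' polyhedron a b)) (hx : x ∈ polyhedron a b) (hd : d ≠ 0)
    (hdx : ∀ i, a i ⬝ᵥ x = b i → a i ⬝ᵥ d = 0) :
    ∃ e, (∀ i, a i ⬝ᵥ x = b i → a i ⬝ᵥ e = 0) ∧ 0 ≤ c ⬝ᵥ e ∧ ∃ j, 0 < a j ⬝ᵥ e := by
  wlog hcd : 0 ≤ c ⬝ᵥ d generalizing d
  · exact this (neg_ne_zero.2 hd) (by simpa using hdx) (by simp; linarith)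
  by_cases hj : ∃ j, 0 < a j ⬝ᵥ d
  · exact ⟨d, hdx, hcd, hj⟩
  push Not at hj
  have hcd0 : c ⬝ᵥ d = 0 := (dotProduct_nonpos_of_forall_dotProduct_nonpos hbdd hx hj).antisymm hcd
  refine ⟨-d, by simpa using hdx, by simp [hcd0], ?_⟩
  by_contra! hj'
  exact hd (ha d fun i => (hj i).antisymm (by simpa using hj' i))

theorem exists_isVertex_le [Fintype ι] (ha : ∀ d, (∀ i, a i ⬝ᵥ d = 0) → d = 0)
    (hbdd : BddAbove ((c ⬝ᵥ ·) '' polyhedron a b)) (hx : x ∈ polyhedron a b) :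
    ∃ v, IsVertex a b v ∧ c ⬝ᵥ x ≤ c ⬝ᵥ v := by
  classical
  let slack (y : Fin n → ℝ) : Finset ι := {i | a i ⬝ᵥ y < b i}
  induction hk : (slack x).card using Nat.strong_induction_on generalizing x with
  | _ k ih =>
  by_cases hv : IsVertex a b x
  · exact ⟨x, hv, le_rfl⟩
  obtain ⟨d, hdx, hd⟩ : ∃ d, (∀ i, a i ⬝ᵥ x = b i → a i ⬝ᵥ d = 0) ∧ d ≠ 0 := by
    simpa [IsVertex, hx] using hv
  obtain ⟨e, hex, hce, hj⟩ := exists_improving_direction ha hbdd hx hd hdx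
  obtain ⟨t, ht, hmem, j, hj, htight⟩ := exists_nonneg_add_smul_mem_polyhedron_tight hx hj
  have hslack : slack (x + t • e) ⊂ slack x := by
    refine (Finset.ssubset_iff_of_subset fun i => ?_).2 ⟨j, ?_, by
      simp only [slack, Finset.mem_filter_univ, htight, lt_self_iff_false, not_false_eq_true]⟩
    · simp only [slack, Finset.mem_filter_univ]
      refine fun hi => (hx i).lt_of_ne fun hxi => hi.ne ?_
      rw [dotProduct_add_smul, hex i hxi, mul_zero, add_zero, hxi]
    · simpa [slack] using (hx j).lt_of_ne fun hxj => hj.ne' (hex j hxj)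
  obtain ⟨v, hv, hxv⟩ := ih _ (hk ▸ Finset.card_lt_card hslack) hmem rfl
  refine ⟨v, hv, le_trans ?_ hxv⟩
  rw [dotProduct_add_smul]
  exact le_add_of_nonneg_right (mul_nonneg ht hce)

theorem IsVertex.eq_of_tight {y : Fin n → ℝ} (hx : IsVertex a b x)
    (h : ∀ i, a i ⬝ᵥ x = b i → a i ⬝ᵥ y = b i) : x = y :=
  sub_eq_zero.1 <| hx.2 _ fun i hi => by rw [dotProduct_sub, hi, h i hi, sub_self]

theorem finite_setOf_isVertex [Finite ι] : {x | IsVertex a b x}.Finite :=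
  Set.Finite.of_finite_image (f := fun x => {i | a i ⬝ᵥ x = b i}) (Set.toFinite _)
    fun _ hx _ _ h => hx.eq_of_tight fun i => (Set.ext_iff.1 h i).1

theorem exists_isVertex_forall_le [Fintype ι] (ha : ∀ d, (∀ i, a i ⬝ᵥ d = 0) → d = 0)
    (hne : (polyhedron a b).Nonempty) (hbdd : BddAbove ((c ⬝ᵥ ·) '' polyhedron a b)) :
    ∃ v, IsVertex a b v ∧ ∀ x ∈ polyhedron a b, c ⬝ᵥ x ≤ c ⬝ᵥ v := by
  obtain ⟨x₀, hx₀⟩ := hne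
  obtain ⟨v₀, hv₀, -⟩ := exists_isVertex_le ha hbdd hx₀
  obtain ⟨v, hv, hmax⟩ := Set.exists_max_image _ (c ⬝ᵥ ·) finite_setOf_isVertex ⟨v₀, hv₀⟩
  refine ⟨v, hv, fun x hx => ?_⟩
  obtain ⟨w, hw, hxw⟩ := exists_isVertex_le ha hbdd hx
  exact hxw.trans (hmax w hw)

theorem exists_tight_linearIndepOn_of_forall_le [Fintype ι] (hx : x ∈ polyhedron a b)
    (hmax : ∀ y ∈ polyhedron a b, c ⬝ᵥ y ≤ c ⬝ᵥ x) :
    ∃ t : Finset ι, (∀ i ∈ t, a i ⬝ᵥ x = b i) ∧ LinearIndepOn ℝ a (t : Set ι) ∧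
      ∃ y : ι → ℝ, 0 ≤ y ∧ c = ∑ i ∈ t, y i • a i := by
  classical
  obtain ⟨t, hts, ht, y, hy, hc⟩ | ⟨d, hd, hcd⟩ :=
    exists_linearIndepOn_nonneg_sum_or_separating {i | a i ⬝ᵥ x = b i} a c
  · exact ⟨t, fun i hi => by simpa using hts hi, ht, y, hy, hc⟩
  · obtain ⟨t, ht, hmem⟩ :=
      exists_pos_add_smul_mem_polyhedron hx fun i hi => hd i (by simpa using hi)
    have := hmax _ hmem
    rw [dotProduct_add_smul] at this
    linarith [mul_pos ht hcd]

/-- The fundamental theorem of linear programming, in the form of an optimal basis. -/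
theorem exists_optimal_basis [Fintype ι] (ha : ∀ d, (∀ i, a i ⬝ᵥ d = 0) → d = 0)
    (hne : (polyhedron a b).Nonempty) (hbdd : BddAbove ((c ⬝ᵥ ·) '' polyhedron a b)) :
    ∃ (N : Fin n → ι) (x : Fin n → ℝ), LinearIndependent ℝ (a ∘ N) ∧ x ∈ polyhedron a b ∧
      (∀ k, a (N k) ⬝ᵥ x = b (N k)) ∧ ∃ y : Fin n → ℝ, 0 ≤ y ∧ c = ∑ k, y k • a (N k) := by
  classical
  obtain ⟨x, hx, hmax⟩ := exists_isVertex_forall_le ha hne hbdd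
  obtain ⟨t, htx, ht, y, hy, rfl⟩ := exists_tight_linearIndepOn_of_forall_le hx.1 hmax
  have hspan : Submodule.span ℝ (a '' {i | a i ⬝ᵥ x = b i}) = ⊤ :=
    span_eq_top_of_forall_dotProduct_eq_zero fun d hd =>
      hx.2 d fun i hi => hd _ ⟨i, hi, rfl⟩
  obtain ⟨N, hN, hNx, htN⟩ := exists_linearIndependent_comp_of_linearIndepOn ht htx hspan
  refine ⟨N, x, hN, hx.1, hNx, fun k => if N k ∈ t then y (N k) else 0,
    fun k => by dsimp only; split_ifs; exacts [hy _, le_rfl], ?_⟩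
  rw [Fintype.sum_of_injective N hN.injective.of_comp _ (fun i => if i ∈ t then y i • a i else 0)
    (fun i hi => if_neg fun hit => hi (htN hit)) (fun k => by simp only [ite_smul, zero_smul]),
    Finset.sum_ite_mem, Finset.univ_inter]

/-- Weak duality. -/
theorem sum_smul_dotProduct_le {κ : Type*} [Fintype κ] {N : κ → ι} {y : κ → ℝ}
    {x₀ : Fin n → ℝ} (hy : 0 ≤ y) (hx₀ : ∀ k, a (N k) ⬝ᵥ x₀ = b (N k))
    (hx : x ∈ polyhedron a b) : (∑ k, y k • a (N k)) ⬝ᵥ x ≤ (∑ k, y k • a (N k)) ⬝ᵥ x₀ := by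
  simp only [sum_dotProduct, smul_dotProduct, smul_eq_mul, hx₀]
  exact Finset.sum_le_sum fun k _ => mul_le_mul_of_nonneg_left (hx (N k)) (hy k)

end Polyhedron

section Width

variable {n : ℕ} {K : Set (Fin n → ℝ)} {c : Fin n → ℝ}

lemma widthAlong_eq_sSup_sub_sInf (K : Set (Fin n → ℝ)) (c : Fin n → ℝ) :
    widthAlong K c =
      sSup ((↑) '' ((c ⬝ᵥ ·) '' K) : Set EReal) - sInf ((↑) '' ((c ⬝ᵥ ·) '' K)) := by
  rw [widthAlong, Set.image_image]
  rfl

theorem widthAlong_eq_of_forall_le {u v : Fin n → ℝ} (hu : u ∈ K) (hv : v ∈ K)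
    (hmax : ∀ x ∈ K, c ⬝ᵥ x ≤ c ⬝ᵥ u) (hmin : ∀ x ∈ K, c ⬝ᵥ v ≤ c ⬝ᵥ x) :
    widthAlong K c = ((c ⬝ᵥ (u - v) : ℝ) : EReal) := by
  have hmono : Monotone ((↑) : ℝ → EReal) := EReal.coe_strictMono.monotone
  have hg := hmono.map_isGreatest (s := (c ⬝ᵥ ·) '' K) ⟨⟨u, hu, rfl⟩, by
    rintro _ ⟨x, hx, rfl⟩; exact hmax x hx⟩
  have hl := hmono.map_isLeast (s := (c ⬝ᵥ ·) '' K) ⟨⟨v, hv, rfl⟩, by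
    rintro _ ⟨x, hx, rfl⟩; exact hmin x hx⟩
  rw [widthAlong_eq_sSup_sub_sInf, hg.csSup_eq, hl.csInf_eq, ← EReal.coe_sub, dotProduct_sub]

theorem bddAbove_and_bddBelow_of_widthAlong_ne_top (hK : K.Nonempty) (h : widthAlong K c ≠ ⊤) :
    BddAbove ((c ⬝ᵥ ·) '' K) ∧ BddBelow ((c ⬝ᵥ ·) '' K) := by
  rw [widthAlong_eq_sSup_sub_sInf] at h
  set S := (c ⬝ᵥ ·) '' K
  obtain ⟨s, hs⟩ : S.Nonempty := hK.image _
  have hsup : (s : EReal) ≤ sSup ((↑) '' S) := le_sSup ⟨s, hs, rfl⟩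
  have hinf : sInf ((↑) '' S) ≤ (s : EReal) := sInf_le ⟨s, hs, rfl⟩
  have hsup_top : sSup ((↑) '' S : Set EReal) ≠ ⊤ := fun htop => h <| by
    rw [htop, EReal.top_sub (ne_top_of_le_ne_top (EReal.coe_ne_top s) hinf)]
  have hinf_bot : sInf ((↑) '' S : Set EReal) ≠ ⊥ := fun hbot => h <| by
    rw [hbot, EReal.sub_bot (ne_bot_of_le_ne_bot (EReal.coe_ne_bot s) hsup)]
  refine ⟨⟨(sSup ((↑) '' S : Set EReal)).toReal, fun r hr => ?_⟩,
    ⟨(sInf ((↑) '' S : Set EReal)).toReal, fun r hr => ?_⟩⟩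
  · exact EReal.coe_le_coe_iff.1 ((le_sSup (mem_image_of_mem _ hr)).trans
      (EReal.le_coe_toReal hsup_top))
  · exact EReal.coe_le_coe_iff.1 ((EReal.coe_toReal_le hinf_bot).trans
      (sInf_le (mem_image_of_mem _ hr)))

end Width

def IsFeasibleBasis {m n : ℕ} (A : Matrix (Fin m) (Fin n) ℚ) (b : Fin m → ℝ) (N : Fin n → Fin m) :
    Prop :=
  IsBasisOf A N ∧ FN A N b ∈ Pb A b

section Bases

variable {m n : ℕ} {A : Matrix (Fin m) (Fin n) ℚ} {N N₁ N₂ : Fin n → Fin m} {b : Fin m → ℝ}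
  {c x : Fin n → ℝ}

lemma IsBasisOf.isUnit_det_map (hN : IsBasisOf A N) :
    IsUnit ((A.submatrix N id).map ((↑) : ℚ → ℝ)).det := by
  rw [← Rat.cast_det]
  exact hN.2.map (Rat.castHom ℝ)

theorem IsBasisOf.of_linearIndependent
    (hN : LinearIndependent ℝ (A.map ((↑) : ℚ → ℝ) ∘ N)) : IsBasisOf A N := by
  refine ⟨hN.injective.of_comp, ?_⟩
  have : IsUnit ((A.submatrix N id).map ((↑) : ℚ → ℝ)) := linearIndependent_rows_iff_isUnit.1 hN
  rw [isUnit_iff_isUnit_det, ← Rat.cast_det, isUnit_iff_ne_zero, Rat.cast_ne_zero] at this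
  exact this.isUnit

lemma dotProduct_FN (hN : IsBasisOf A N) (k : Fin n) :
    A.map ((↑) : ℚ → ℝ) (N k) ⬝ᵥ FN A N b = b (N k) := by
  have := congrFun (mulVec_mulVec (fun i => b (N i)) ((A.submatrix N id).map ((↑) : ℚ → ℝ))
    ((A.submatrix N id).map ((↑) : ℚ → ℝ))⁻¹) k
  rwa [mul_nonsing_inv _ (hN.isUnit_det_map), one_mulVec] at this

lemma FN_eq_of_forall_dotProduct_eq (hN : IsBasisOf A N)
    (hx : ∀ k, A.map ((↑) : ℚ → ℝ) (N k) ⬝ᵥ x = b (N k)) : FN A N b = x := by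
  have : (A.submatrix N id).map ((↑) : ℚ → ℝ) *ᵥ x = fun k => b (N k) := funext hx
  rw [FN, ← this, mulVec_mulVec, nonsing_inv_mul _ (hN.isUnit_det_map), one_mulVec]

lemma mem_posCone_iff :
    c ∈ posCone A N ↔ ∃ y : Fin n → ℝ, 0 ≤ y ∧ c = ∑ k, y k • A.map ((↑) : ℚ → ℝ) (N k) := by
  simp [posCone, funext_iff, Finset.sum_apply, Pi.le_def]

lemma mem_negCone_iff : c ∈ negCone A N ↔ -c ∈ posCone A N := by
  simp [posCone, negCone, neg_eq_iff_eq_neg]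

theorem dotProduct_le_dotProduct_FN (hN : IsBasisOf A N) (hc : c ∈ posCone A N)
    (hx : x ∈ Pb A b) : c ⬝ᵥ x ≤ c ⬝ᵥ FN A N b := by
  obtain ⟨y, hy, rfl⟩ := mem_posCone_iff.1 hc
  exact sum_smul_dotProduct_le hy (dotProduct_FN hN) hx

theorem dotProduct_FN_le_dotProduct (hN : IsBasisOf A N) (hc : c ∈ negCone A N)
    (hx : x ∈ Pb A b) : c ⬝ᵥ FN A N b ≤ c ⬝ᵥ x := by
  simpa using dotProduct_le_dotProduct_FN hN (mem_negCone_iff.1 hc) hx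

theorem isGreatest_dotProduct_FN (hN : IsFeasibleBasis A b N) (hc : c ∈ posCone A N) :
    IsGreatest {r | ∃ x ∈ Pb A b, r = c ⬝ᵥ x} (c ⬝ᵥ FN A N b) :=
  ⟨⟨_, hN.2, rfl⟩, by rintro _ ⟨x, hx, rfl⟩; exact dotProduct_le_dotProduct_FN hN.1 hc hx⟩

theorem isLeast_dotProduct_FN (hN : IsFeasibleBasis A b N) (hc : c ∈ negCone A N) :
    IsLeast {r | ∃ x ∈ Pb A b, r = c ⬝ᵥ x} (c ⬝ᵥ FN A N b) :=
  ⟨⟨_, hN.2, rfl⟩, by rintro _ ⟨x, hx, rfl⟩; exact dotProduct_FN_le_dotProduct hN.1 hc hx⟩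

theorem widthAlong_Pb_eq (hN₁ : IsFeasibleBasis A b N₁) (hN₂ : IsFeasibleBasis A b N₂)
    (hc₁ : c ∈ posCone A N₁) (hc₂ : c ∈ negCone A N₂) :
    widthAlong (Pb A b) c = ((c ⬝ᵥ (FN A N₁ b - FN A N₂ b) : ℝ) : EReal) :=
  widthAlong_eq_of_forall_le hN₁.2 hN₂.2 (fun _ hx => dotProduct_le_dotProduct_FN hN₁.1 hc₁ hx)
    fun _ hx => dotProduct_FN_le_dotProduct hN₂.1 hc₂ hx

theorem exists_isFeasibleBasis_mem_posCone (hA : A.rank = n) (hne : (Pb A b).Nonempty)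
    (hbdd : BddAbove ((c ⬝ᵥ ·) '' Pb A b)) : ∃ N, IsFeasibleBasis A b N ∧ c ∈ posCone A N := by
  have hA' : A.rank = Fintype.card (Fin n) := by rw [hA, Fintype.card_fin]
  obtain ⟨N, x, hN, hx, hNx, y, hy, rfl⟩ := exists_optimal_basis (a := A.map ((↑) : ℚ → ℝ))
    (fun d hd => eq_zero_of_map_mulVec_eq_zero hA' (Rat.castHom ℝ) (funext hd)) hne hbdd
  have hN := IsBasisOf.of_linearIndependent hN
  exact ⟨N, ⟨hN, FN_eq_of_forall_dotProduct_eq hN hNx ▸ hx⟩, mem_posCone_iff.2 ⟨y, hy, rfl⟩⟩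

theorem exists_isFeasibleBasis_mem_negCone (hA : A.rank = n) (hne : (Pb A b).Nonempty)
    (hbdd : BddBelow ((c ⬝ᵥ ·) '' Pb A b)) : ∃ N, IsFeasibleBasis A b N ∧ c ∈ negCone A N := by
  obtain ⟨B, hB⟩ := hbdd
  obtain ⟨N, hN, hc⟩ := exists_isFeasibleBasis_mem_posCone (c := -c) hA hne
    ⟨-B, by rintro _ ⟨x, hx, rfl⟩; simpa using hB ⟨x, hx, rfl⟩⟩
  exact ⟨N, hN, mem_negCone_iff.2 hc⟩

end Bases

/-- If `P_b` is nonempty and has finite lattice width, then there are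
bases `N₁, N₂` of `A` such that the lattice width of `P_b` equals the minimum of
`c (F_{N₁} - F_{N₂}) b` over the nonzero integral vectors `c` of `C₁ ∩ C₂`, and for
every `c ∈ C₁ ∩ C₂` the maximum resp. minimum of `c·x` over `P_b` is `c F_{N₁} b`
resp. `c F_{N₂} b`. -/
theorem lattice_width_via_bases {m n : ℕ} (A : Matrix (Fin m) (Fin n) ℚ)
    (hrank : A.rank = n) (b : Fin m → ℝ) (hne : (Pb A b).Nonempty)
    (hfin : latticeWidth (Pb A b) ≠ ⊤) :
    ∃ N₁ N₂ : Fin n → Fin m, IsBasisOf A N₁ ∧ IsBasisOf A N₂ ∧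
      latticeWidth (Pb A b) =
        sInf {w : EReal | ∃ c : Fin n → ℤ, c ≠ 0 ∧
          (fun i => (c i : ℝ)) ∈ posCone A N₁ ∩ negCone A N₂ ∧
          w = ((∑ i, (c i : ℝ) * (FN A N₁ b i - FN A N₂ b i) : ℝ) : EReal)} ∧
      ∀ c ∈ posCone A N₁ ∩ negCone A N₂,
        IsGreatest {r : ℝ | ∃ x ∈ Pb A b, r = ∑ i, c i * x i}
          (∑ i, c i * FN A N₁ b i) ∧
        IsLeast {r : ℝ | ∃ x ∈ Pb A b, r = ∑ i, c i * x i}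
          (∑ i, c i * FN A N₂ b i) := by
  obtain ⟨⟨N₁, N₂⟩, ⟨hN₁, hN₂⟩, hwidth⟩ := exists_sInf_eq_sInf_of_finite
    (P := {p : (Fin n → Fin m) × (Fin n → Fin m) | IsFeasibleBasis A b p.1 ∧
      IsFeasibleBasis A b p.2})
    (S := fun p => {w : EReal | ∃ c : Fin n → ℤ, c ≠ 0 ∧
      (fun i => (c i : ℝ)) ∈ posCone A p.1 ∩ negCone A p.2 ∧
      w = ((∑ i, (c i : ℝ) * (FN A p.1 b i - FN A p.2 b i) : ℝ) : EReal)})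
    (Set.toFinite _) hfin
    (by
      rintro p ⟨hN₁, hN₂⟩ _ ⟨c, hc, ⟨hc₁, hc₂⟩, rfl⟩
      exact ⟨c, hc, (widthAlong_Pb_eq hN₁ hN₂ hc₁ hc₂).symm⟩)
    (by
      rintro _ ⟨c, hc, rfl⟩ hc_top
      obtain ⟨hup, hlow⟩ := bddAbove_and_bddBelow_of_widthAlong_ne_top hne hc_top
      obtain ⟨N₁, hN₁, hc₁⟩ := exists_isFeasibleBasis_mem_posCone hrank hne hup
      obtain ⟨N₂, hN₂, hc₂⟩ := exists_isFeasibleBasis_mem_negCone hrank hne hlow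
      exact ⟨(N₁, N₂), ⟨hN₁, hN₂⟩, c, hc, ⟨hc₁, hc₂⟩, widthAlong_Pb_eq hN₁ hN₂ hc₁ hc₂⟩)
  exact ⟨N₁, N₂, hN₁.1, hN₂.1, hwidth, fun c ⟨hc₁, hc₂⟩ =>
    ⟨isGreatest_dotProduct_FN hN₁ hc₁, isLeast_dotProduct_FN hN₂ hc₂⟩⟩
end
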